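/- Let t₁, t₂, t₃ ∈ ℝ² be tower positions with calibrated source intensities s_c⁽ⁱ⁾ > 0. Fix an actual receiver position ω ∈ ℝ² and any target estimate ι ∈ ℝ², and set the spoofed source intensities s⁽ⁱ⁾ = s_c⁽ⁱ⁾·(1 + ‖tᵢ − ω‖²)/(1 + ‖tᵢ − ι‖²). Then the intensity actually measured at ω under the spoofed sources, namely s⁽ⁱ⁾/(1 + ‖tᵢ − ω‖²), equals s_c⁽ⁱ⁾/(1 + ‖tᵢ − ι‖²) for each i; in particular ι lies in the preimage of the resulting observation under the calibrated sensor map h(x)ᵢ = s_c⁽ⁱ⁾/(1 + ‖x − tᵢ‖²), and if moreover t₁, t₂, t₃ are non-collinear this preimage equals exactly {ι}. -/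

import Mathlib

/-!
With the spoofed intensities the factor `1 + ‖tᵢ - ω‖²` of the true path loss cancels, so the
receiver measures exactly what the calibrated map predicts at `ι`. Conversely, since `s_c⁽ⁱ⁾ ≠ 0`
and `r ↦ 1 / (1 + r²)` is injective on `[0, ∞)`, any `x` with the same calibrated readings is
at the same distance as `ι` from every tower. Then every tower lies on the perpendicular
bisector of `x` and `ι`; three affinely independent points span the plane, so that bisector is
the whole plane, which forces `x = ι`.
-/

lemma eq_of_div_one_add_sq_eq {c a b : ℝ} (hc : c ≠ 0) (ha : 0 ≤ a) (hb : 0 ≤ b)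
    (h : c / (1 + a ^ 2) = c / (1 + b ^ 2)) : a = b := by
  have hsq : a ^ 2 = b ^ 2 := by
    field_simp at h
    linarith
  exact (sq_eq_sq₀ ha hb).1 hsq

lemma eq_of_forall_dist_eq_of_affineSpan_eq_top {V P ι : Type*} [NormedAddCommGroup V]
    [InnerProductSpace ℝ V] [MetricSpace P] [NormedAddTorsor V P] {p : ι → P}
    (hp : affineSpan ℝ (Set.range p) = ⊤) {x y : P} (h : ∀ i, dist x (p i) = dist y (p i)) :
    x = y := by
  rw [← AffineSubspace.perpBisector_eq_top, eq_top_iff, ← hp, affineSpan_le]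
  rintro _ ⟨i, rfl⟩
  exact AffineSubspace.mem_perpBisector_iff_dist_eq'.2 (h i)

/-- Spoofing the tower intensities to
`s i = s_c i * (1 + ‖t i - ω‖²) / (1 + ‖t i - ι‖²)` makes the intensity actually measured
at the true position `ω` equal `s_c i / (1 + ‖t i - ι‖²)` for each `i`; in particular the
target estimate `ι` lies in the preimage of the resulting observation under the calibrated
sensor map, and if the towers are non-collinear the preimage is exactly `{ι}`. -/
theorem spoofed_intensities_produce_target_estimate
    (t : Fin 3 → EuclideanSpace ℝ (Fin 2))
    (s_c : Fin 3 → ℝ) (hs : ∀ i, 0 < s_c i)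
    (ω ι : EuclideanSpace ℝ (Fin 2))
    (s : Fin 3 → ℝ)
    (hspoof : ∀ i, s i = s_c i * (1 + ‖t i - ω‖ ^ 2) / (1 + ‖t i - ι‖ ^ 2)) :
    (∀ i : Fin 3, s i / (1 + ‖t i - ω‖ ^ 2) = s_c i / (1 + ‖t i - ι‖ ^ 2)) ∧
    ι ∈ {x : EuclideanSpace ℝ (Fin 2) |
          ∀ i : Fin 3, s_c i / (1 + ‖x - t i‖ ^ 2) = s i / (1 + ‖t i - ω‖ ^ 2)} ∧
    (AffineIndependent ℝ t →
      {x : EuclideanSpace ℝ (Fin 2) |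
          ∀ i : Fin 3, s_c i / (1 + ‖x - t i‖ ^ 2) = s i / (1 + ‖t i - ω‖ ^ 2)} = {ι}) := by
  have hmeasured : ∀ i, s i / (1 + ‖t i - ω‖ ^ 2) = s_c i / (1 + ‖t i - ι‖ ^ 2) := by
    intro i
    have : (1 + ‖t i - ω‖ ^ 2) ≠ 0 := by positivity
    rw [hspoof i]
    field_simp
  have hι : ∀ i, s_c i / (1 + ‖ι - t i‖ ^ 2) = s i / (1 + ‖t i - ω‖ ^ 2) := fun i => by
    rw [hmeasured i, norm_sub_rev]
  refine ⟨hmeasured, hι, fun hind => Set.eq_singleton_iff_unique_mem.2 ⟨hι, fun x hx => ?_⟩⟩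
  have hspan : affineSpan ℝ (Set.range t) = ⊤ :=
    hind.affineSpan_eq_top_iff_card_eq_finrank_add_one.2 (by simp [finrank_euclideanSpace])
  refine eq_of_forall_dist_eq_of_affineSpan_eq_top hspan fun i => ?_
  rw [dist_eq_norm, dist_eq_norm]
  exact eq_of_div_one_add_sq_eq (hs i).ne' (norm_nonneg _) (norm_nonneg _)
    ((hx i).trans (hι i).symm)
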